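/- Let A = {a_0 < a_1 < a_2 < a_3} be a set of 4 integers, r = (r_0, 1, 1, r_3) with r_0, r_3 positive integers, and h an integer with 2 ≤ h ≤ r_0 + 2 + r_3 − 2. Then |h^{(r)}A| = L(r,h) if and only if a_1 − a_0 = a_3 − a_2. -/

import Mathlib

open Finset

/-- A step `U → W`: some coordinate `j` decreases by 1 and coordinate `j+1` increases by 1. -/
def IsStep (k : ℕ) (U W : ℕ → ℕ) : Prop :=
  ∃ j, j + 1 < k ∧ U j = W j + 1 ∧ W (j + 1) = U (j + 1) + 1 ∧
    ∀ i, i ≠ j → i ≠ j + 1 → W i = U i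

/-- Membership in `R(r,h)`: a `k`-tuple of nonnegative integers with `x i ≤ r i` and `∑ x i = h`. -/
def InR (k : ℕ) (r : ℕ → ℕ) (h : ℕ) (x : ℕ → ℕ) : Prop :=
  (∀ i < k, x i ≤ r i) ∧ (∀ i, k ≤ i → x i = 0) ∧ ∑ i ∈ Finset.range k, x i = h

/-- The general `h`-fold sumset `h^{(r)}A` for `A = {a 0 < a 1 < ⋯ < a (k-1)}`. -/
def genSumset (k : ℕ) (a : ℕ → ℤ) (r : ℕ → ℕ) (h : ℕ) : Set ℤ :=
  {z | ∃ s : ℕ → ℕ, (∀ i < k, s i ≤ r i) ∧ (∑ i ∈ Finset.range k, s i = h) ∧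
    z = ∑ i ∈ Finset.range k, (s i : ℤ) * a i}

/-- The quantity `L(r,h)` in terms of `I`, `M`, `δ`, `θ`. -/
def Lval (k I M : ℕ) (r : ℕ → ℕ) (δ θ : ℕ) : ℤ :=
  (∑ j ∈ Finset.Ico (M + 1) k, (j : ℤ) * r j) - (∑ j ∈ Finset.range I, (j : ℤ) * r j)
    + (M : ℤ) * θ - (I : ℤ) * δ + 1

/-- The weighted sum `S(X) = ∑ j·x j`. -/
def Sw (k : ℕ) (x : ℕ → ℕ) : ℤ := ∑ j ∈ Finset.range k, (j : ℤ) * x j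

/-- An `(r,h)`-path of length `t`: `P 1 → P 2 → ⋯ → P t`, all in `R(r,h)`. -/
def IsPath (k : ℕ) (r : ℕ → ℕ) (h t : ℕ) (P : ℕ → ℕ → ℕ) : Prop :=
  (∀ i, 1 ≤ i → i ≤ t → InR k r h (P i)) ∧
  (∀ i, 1 ≤ i → i < t → IsStep k (P i) (P (i + 1)))

/-!
Encode `s ∈ R(r,h)` by `(t, m)` with `t = s₃` and `m = s₁ + 2 s₂ < 4`; then
`∑ sᵢ aᵢ = h a₀ + t (a₃ - a₀) + s₁ (a₁ - a₀) + s₂ (a₂ - a₀)` and `L(r,h)` is the number of values of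
the weight `S(s) = 3 t + m`, which fill an interval. If `a₁ - a₀ = a₃ - a₂`, the sum is a strictly
increasing function of `S`, so `|h^{(r)}A| = L(r,h)`. Otherwise the sum is injective in `(t, m)`,
while the weight is not (`(t, 3)` and `(t + 1, 0)` collide), so `|h^{(r)}A| > L(r,h)`.
-/

namespace FourElt

def caps (r₀ r₃ : ℕ) (j : ℕ) : ℕ :=
  if j = 0 then r₀ else if j = 1 then 1 else if j = 2 then 1 else r₃

def elems (a₀ a₁ a₂ a₃ : ℤ) (j : ℕ) : ℤ :=
  if j = 0 then a₀ else if j = 1 then a₁ else if j = 2 then a₂ else a₃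

/-- `(t, m)` encodes `s ∈ R(r,h)` with `s₃ = t`, `s₁ = m % 2`, `s₂ = m / 2`. -/
def codes (h r₀ r₃ : ℕ) : Finset (ℕ × ℕ) :=
  (range (r₃ + 1) ×ˢ range 4).filter fun p =>
    p.1 + (p.2 % 2 + p.2 / 2) ≤ h ∧ h ≤ p.1 + (p.2 % 2 + p.2 / 2) + r₀

lemma mem_codes {h r₀ r₃ t m : ℕ} : (t, m) ∈ codes h r₀ r₃ ↔
    t ≤ r₃ ∧ m < 4 ∧ t + (m % 2 + m / 2) ≤ h ∧ h ≤ t + (m % 2 + m / 2) + r₀ := by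
  simp [codes, Nat.lt_succ_iff, and_assoc]

def value (h : ℕ) (a₀ a₁ a₂ a₃ : ℤ) (p : ℕ × ℕ) : ℤ :=
  h * a₀ + p.1 * (a₃ - a₀) + (p.2 % 2 : ℕ) * (a₁ - a₀) + (p.2 / 2 : ℕ) * (a₂ - a₀)

def weight (p : ℕ × ℕ) : ℕ := 3 * p.1 + p.2

lemma genSumset_eq_image (h : ℕ) (a₀ a₁ a₂ a₃ : ℤ) (r₀ r₃ : ℕ) :
    genSumset 4 (elems a₀ a₁ a₂ a₃) (caps r₀ r₃) h =
      (codes h r₀ r₃).image (value h a₀ a₁ a₂ a₃) := by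
  ext z
  simp only [genSumset, sum_range_succ, sum_range_zero, zero_add, Set.mem_ofPred_eq, coe_image,
    Set.mem_image, mem_coe, Prod.exists, mem_codes, elems, caps, Nat.reduceEqDiff, reduceIte]
  constructor
  · rintro ⟨s, hs, hsum, rfl⟩
    have hs₀ := hs 0 (by norm_num); have hs₁ := hs 1 (by norm_num)
    have hs₂ := hs 2 (by norm_num); have hs₃ := hs 3 (by norm_num)
    simp only [Nat.reduceEqDiff, reduceIte] at hs₀ hs₁ hs₂ hs₃
    have hmod : (s 1 + 2 * s 2) % 2 = s 1 := by omega
    have hdiv : (s 1 + 2 * s 2) / 2 = s 2 := by omega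
    refine ⟨s 3, s 1 + 2 * s 2, by omega, ?_⟩
    have hfirst : (s 0 : ℤ) = h - s 1 - s 2 - s 3 := by omega
    simp only [value, hmod, hdiv, hfirst]
    ring
  · rintro ⟨t, m, ⟨ht, hm, hlo, hhi⟩, rfl⟩
    refine ⟨fun i => if i = 0 then h - (t + (m % 2 + m / 2)) else if i = 1 then m % 2
      else if i = 2 then m / 2 else t, ?_, by simp only [Nat.reduceEqDiff, reduceIte]; omega, ?_⟩
    · intro i hi
      interval_cases i <;> simp only [Nat.reduceEqDiff, reduceIte] <;> omega
    · simp only [value, Nat.reduceEqDiff, reduceIte]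
      push_cast [Nat.cast_sub hlo]
      ring

def valueOfWeight (h : ℕ) (a₀ a₁ a₂ a₃ : ℤ) (n : ℕ) : ℤ := value h a₀ a₁ a₂ a₃ (n / 3, n % 3)

lemma strictMono_valueOfWeight {h : ℕ} {a₀ a₁ a₂ a₃ : ℤ} (ha₀₁ : a₀ < a₁) (ha₁₂ : a₁ < a₂)
    (ha₂₃ : a₂ < a₃) : StrictMono (valueOfWeight h a₀ a₁ a₂ a₃) := by
  refine strictMono_nat_of_lt_succ fun n => ?_
  obtain ⟨q, i, hi, rfl⟩ : ∃ q i, i < 3 ∧ n = 3 * q + i :=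
    ⟨n / 3, n % 3, Nat.mod_lt _ (by norm_num), (Nat.div_add_mod n 3).symm⟩
  interval_cases i <;>
    simp only [valueOfWeight, value, add_assoc, Nat.mul_add_div three_pos, Nat.mul_add_mod] <;>
    norm_num <;> linarith

lemma value_eq_valueOfWeight {h : ℕ} {a₀ a₁ a₂ a₃ : ℤ} (hda : a₁ - a₀ = a₃ - a₂) {t m : ℕ}
    (hm : m < 4) : value h a₀ a₁ a₂ a₃ (t, m) = valueOfWeight h a₀ a₁ a₂ a₃ (weight (t, m)) := by
  interval_cases m <;>
    simp only [valueOfWeight, value, weight, Nat.mul_add_div three_pos, Nat.mul_add_mod] <;>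
    norm_num
  -- `(t, 3)` and `(t + 1, 0)` have the same value because `a₁ + a₂ = a₀ + a₃`
  linarith

lemma le_succ_of_mul_add_eq_mul_add {D w w' : ℤ} {t t' : ℕ} (hD : 0 < D) (hw : w < 2 * D)
    (hw' : 0 ≤ w') (heq : t * D + w = t' * D + w') : t' ≤ t + 1 := by
  by_contra! ht
  have : ((t + 2 : ℕ) : ℤ) * D ≤ t' * D := by gcongr; omega
  push_cast at this
  linarith

lemma value_injOn_codes {h r₀ r₃ : ℕ} {a₀ a₁ a₂ a₃ : ℤ} (ha₀₁ : a₀ < a₁) (ha₁₂ : a₁ < a₂)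
    (ha₂₃ : a₂ < a₃) (hne : a₁ - a₀ ≠ a₃ - a₂) :
    Set.InjOn (value h a₀ a₁ a₂ a₃) (codes h r₀ r₃) := by
  rintro ⟨t, m⟩ hp ⟨t', m'⟩ hq heq
  have hm := (mem_codes.1 hp).2.1
  have hm' := (mem_codes.1 hq).2.1
  have hoffset : ∀ k < 4, 0 ≤ (k % 2 : ℕ) * (a₁ - a₀) + (k / 2 : ℕ) * (a₂ - a₀) ∧
      (k % 2 : ℕ) * (a₁ - a₀) + (k / 2 : ℕ) * (a₂ - a₀) < 2 * (a₃ - a₀) := by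
    intro k hk
    interval_cases k <;> refine ⟨?_, ?_⟩ <;> norm_num <;> linarith
  simp only [value] at heq
  have h₁ := le_succ_of_mul_add_eq_mul_add (t := t) (t' := t') (by linarith) (hoffset m hm).2
    (hoffset m' hm').1 (by linarith)
  have h₂ := le_succ_of_mul_add_eq_mul_add (t := t') (t' := t) (by linarith) (hoffset m' hm').2
    (hoffset m hm).1 (by linarith)
  obtain rfl | rfl | rfl : t' = t ∨ t' = t + 1 ∨ t = t' + 1 := by omega
  all_goals interval_cases m <;> interval_cases m' <;> norm_num at heq ⊢ <;>
    first | rfl | exact hne (by linarith)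

lemma card_image_value_codes {h r₀ r₃ : ℕ} {a₀ a₁ a₂ a₃ : ℤ} (ha₀₁ : a₀ < a₁) (ha₁₂ : a₁ < a₂)
    (ha₂₃ : a₂ < a₃) (hda : a₁ - a₀ = a₃ - a₂) :
    ((codes h r₀ r₃).image (value h a₀ a₁ a₂ a₃)).card = ((codes h r₀ r₃).image weight).card := by
  rw [← card_image_of_injective _ (strictMono_valueOfWeight ha₀₁ ha₁₂ ha₂₃).injective,
    image_image]
  refine congrArg card (image_congr fun p hp => ?_)
  exact value_eq_valueOfWeight hda (mem_codes.1 hp).2.1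

/-- `minWeight` and `maxWeight` are the extreme values of the weight `S` on `R(r,h)`. -/
def minWeight (h r₀ : ℕ) : ℕ :=
  if h ≤ r₀ then 0 else if h = r₀ + 1 then 1 else 3 * (h - r₀) - 3

def maxWeight (h r₃ : ℕ) : ℕ :=
  if h ≤ r₃ then 3 * h else if h = r₃ + 1 then 3 * r₃ + 2 else 3 * r₃ + 3

lemma image_weight_codes {h r₀ r₃ : ℕ} (hr₀ : 0 < r₀) (hr₃ : 0 < r₃) (hh : 2 ≤ h) :
    (codes h r₀ r₃).image weight = Icc (minWeight h r₀) (maxWeight h r₃) := by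
  ext n
  simp only [mem_image, mem_Icc, Prod.exists, mem_codes, minWeight, maxWeight, weight]
  constructor
  · rintro ⟨t, m, ⟨ht, hm, hlo, hhi⟩, rfl⟩
    split_ifs <;> omega
  · intro hn
    by_cases hc : n / 3 ≤ r₃ ∧ n / 3 + (n % 3 % 2 + n % 3 / 2) ≤ h ∧
        h ≤ n / 3 + (n % 3 % 2 + n % 3 / 2) + r₀
    · exact ⟨n / 3, n % 3, ⟨hc.1, by omega, hc.2⟩, by omega⟩
    · refine ⟨n / 3 - 1, 3, ⟨?_, by omega, ?_, ?_⟩, ?_⟩ <;> split_ifs at hn <;> omega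

lemma card_image_weight_codes {h r₀ r₃ : ℕ} (hr₀ : 0 < r₀) (hr₃ : 0 < r₃) (hh : 2 ≤ h)
    (hhr : h ≤ r₀ + r₃) :
    (((codes h r₀ r₃).image weight).card : ℤ) = maxWeight h r₃ - minWeight h r₀ + 1 := by
  rw [image_weight_codes hr₀ hr₃ hh, Nat.card_Icc]
  unfold minWeight maxWeight
  split_ifs <;> omega

lemma card_image_weight_codes_lt {h r₀ r₃ : ℕ} (hr₀ : 0 < r₀) (hr₃ : 0 < r₃) (hh : 2 ≤ h)
    (hhr : h ≤ r₀ + r₃) :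
    ((codes h r₀ r₃).image weight).card < (codes h r₀ r₃).card := by
  set t := h - (r₀ + 1)
  have hmem₁ : (t, 3) ∈ codes h r₀ r₃ := mem_codes.2 ⟨by omega, by norm_num, by omega, by omega⟩
  have hmem₀ : (t + 1, 0) ∈ codes h r₀ r₃ :=
    mem_codes.2 ⟨by omega, by norm_num, by omega, by omega⟩
  refine card_image_le.lt_of_ne fun hcard => ?_
  have := card_image_iff.1 hcard hmem₁ hmem₀ (by simp only [weight]; ring)
  simp at this

lemma sum_range_mul_add_eq_minWeight {h I δ r₀ r₃ : ℕ} (hh : h < r₀ + 2 + r₃)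
    (hI2 : ∀ I' ≤ 4, (∑ j ∈ range I', caps r₀ r₃ j ≤ h) → I' ≤ I)
    (hδ : (δ : ℤ) = h - ∑ j ∈ range I, (caps r₀ r₃ j : ℤ)) :
    ∑ j ∈ range I, (j : ℤ) * caps r₀ r₃ j + I * δ = minWeight h r₀ := by
  have hI3 : I ≤ 3 := by
    by_contra! hI4
    have hsub := sum_le_sum_of_subset (f := caps r₀ r₃) (range_subset_range.2 (by omega : 4 ≤ I))
    have hall : ∑ j ∈ range 4, caps r₀ r₃ j = r₀ + 2 + r₃ := by
      simp [sum_range_succ, caps]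
    rw [← Nat.cast_sum] at hδ
    omega
  have hnext := hI2 (I + 1) (by omega)
  interval_cases I <;> simp [sum_range_succ, caps] at hnext hδ ⊢ <;>
    unfold minWeight <;> split_ifs <;> omega

lemma sum_Ico_mul_add_eq_maxWeight {h M θ r₀ r₃ : ℕ}
    (hM2 : ∀ M', (∑ j ∈ Ico (M' + 1) 4, caps r₀ r₃ j ≤ h) → M ≤ M')
    (hθ : (θ : ℤ) = h - ∑ j ∈ Ico (M + 1) 4, (caps r₀ r₃ j : ℤ)) :
    ∑ j ∈ Ico (M + 1) 4, (j : ℤ) * caps r₀ r₃ j + M * θ = maxWeight h r₃ := by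
  have hM3 : M ≤ 3 := hM2 3 (by simp)
  have hprev : 1 ≤ M → h < ∑ j ∈ Ico M 4, caps r₀ r₃ j := fun hM => by
    by_contra! hle
    have := hM2 (M - 1) (by rwa [Nat.sub_add_cancel hM])
    omega
  interval_cases M <;> simp [sum_Ico_eq_sum_range, sum_range_succ, caps] at hprev hθ ⊢ <;>
    unfold maxWeight <;> split_ifs <;> omega

lemma Lval_caps {h I M δ θ r₀ r₃ : ℕ} (hh : h < r₀ + 2 + r₃)
    (hI2 : ∀ I' ≤ 4, (∑ j ∈ range I', caps r₀ r₃ j ≤ h) → I' ≤ I)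
    (hM2 : ∀ M', (∑ j ∈ Ico (M' + 1) 4, caps r₀ r₃ j ≤ h) → M ≤ M')
    (hδ : (δ : ℤ) = h - ∑ j ∈ range I, (caps r₀ r₃ j : ℤ))
    (hθ : (θ : ℤ) = h - ∑ j ∈ Ico (M + 1) 4, (caps r₀ r₃ j : ℤ)) :
    Lval 4 I M (caps r₀ r₃) δ θ = maxWeight h r₃ - minWeight h r₀ + 1 := by
  have hmin := sum_range_mul_add_eq_minWeight hh hI2 hδ
  have hmax := sum_Ico_mul_add_eq_maxWeight hM2 hθ
  unfold Lval
  linarith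

end FourElt

open FourElt

theorem four_elt_r1_r2_eq_one_general (h I M δ θ : ℕ) (a₀ a₁ a₂ a₃ : ℤ) (r₀ r₃ : ℕ)
    (ha01 : a₀ < a₁) (ha12 : a₁ < a₂) (ha23 : a₂ < a₃)
    (hr0 : 0 < r₀) (hr3 : 0 < r₃)
    (hh2 : 2 ≤ h) (hhk : h + 2 ≤ r₀ + 2 + r₃)
    (r : ℕ → ℕ)
    (hrdef : r = fun j => if j = 0 then r₀ else if j = 1 then 1 else if j = 2 then 1 else r₃)
    (a : ℕ → ℤ)
    (hadef : a = fun j => if j = 0 then a₀ else if j = 1 then a₁ else if j = 2 then a₂ else a₃)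
    (hI2 : ∀ I' ≤ 4, (∑ j ∈ Finset.range I', r j ≤ h) → I' ≤ I)
    (hM2 : ∀ M', (∑ j ∈ Finset.Ico (M' + 1) 4, r j ≤ h) → M ≤ M')
    (hδ : (δ : ℤ) = (h : ℤ) - ∑ j ∈ Finset.range I, (r j : ℤ))
    (hθ : (θ : ℤ) = (h : ℤ) - ∑ j ∈ Finset.Ico (M + 1) 4, (r j : ℤ)) :
    ((genSumset 4 a r h).ncard : ℤ) = Lval 4 I M r δ θ ↔ a₁ - a₀ = a₃ - a₂ := by
  obtain rfl : r = caps r₀ r₃ := hrdef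
  obtain rfl : a = elems a₀ a₁ a₂ a₃ := hadef
  have hhr : h ≤ r₀ + r₃ := by omega
  rw [Lval_caps (by omega) hI2 hM2 hδ hθ, ← card_image_weight_codes hr0 hr3 hh2 hhr,
    genSumset_eq_image, Set.ncard_coe_finset, Nat.cast_inj]
  constructor
  · intro hcard
    by_contra hne
    rw [card_image_of_injOn (value_injOn_codes ha01 ha12 ha23 hne)] at hcard
    exact (card_image_weight_codes_lt hr0 hr3 hh2 hhr).ne' hcard
  · exact fun hda => card_image_value_codes ha01 ha12 ha23 hda

theorem four_elt_r1_r2_eq_one (h I M δ θ : ℕ) (a₀ a₁ a₂ a₃ : ℤ) (r₀ r₃ : ℕ)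
    (ha01 : a₀ < a₁) (ha12 : a₁ < a₂) (ha23 : a₂ < a₃)
    (hr0 : 0 < r₀) (hr3 : 0 < r₃)
    (hh2 : 2 ≤ h) (hhk : h + 2 ≤ r₀ + 2 + r₃)
    (r : ℕ → ℕ)
    (hrdef : r = fun j => if j = 0 then r₀ else if j = 1 then 1 else if j = 2 then 1 else r₃)
    (a : ℕ → ℤ)
    (hadef : a = fun j => if j = 0 then a₀ else if j = 1 then a₁ else if j = 2 then a₂ else a₃)
    (hIk : I ≤ 4)
    (hI1 : ∑ j ∈ Finset.range I, r j ≤ h)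
    (hI2 : ∀ I' ≤ 4, (∑ j ∈ Finset.range I', r j ≤ h) → I' ≤ I)
    (hM1 : ∑ j ∈ Finset.Ico (M + 1) 4, r j ≤ h)
    (hM2 : ∀ M', (∑ j ∈ Finset.Ico (M' + 1) 4, r j ≤ h) → M ≤ M')
    (hδ : (δ : ℤ) = (h : ℤ) - ∑ j ∈ Finset.range I, (r j : ℤ))
    (hθ : (θ : ℤ) = (h : ℤ) - ∑ j ∈ Finset.Ico (M + 1) 4, (r j : ℤ)) :
    ((genSumset 4 a r h).ncard : ℤ) = Lval 4 I M r δ θ ↔ a₁ - a₀ = a₃ - a₂ :=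
  four_elt_r1_r2_eq_one_general h I M δ θ a₀ a₁ a₂ a₃ r₀ r₃ ha01 ha12 ha23 hr0 hr3 hh2 hhk r hrdef a
    hadef hI2 hM2 hδ hθ
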